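/- arXiv:1712.06907 — 2 statements merged into one kernel-verified Lean document; each statement's English description precedes it below -/
import Mathlib

section
/- The Euclidean dual code Q_q(f,g,h)^{perp} of the quasi-cyclic code Q_q(f,g,h) equals the quasi-cyclic code of length 2n corresponding to the R-submodule of R^2 generated by ([-hbar(x) g^perp(x)], [g^perp(x)]) and ([f^perp(x)], 0). -/
open Polynomial Finset

noncomputable section

variable {F : Type*} [Field F] [DecidableEq F]

/-- The vector in `F^n` corresponding to the residue class of a polynomial
in `F[x]/(x^n-1)`: the coefficients of its canonical representative of degree `< n`. -/
def vecOf (n : ℕ) : F[X] →ₗ[F] (Fin n → F) where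
  toFun a := fun i => (a %ₘ (X ^ n - 1)).coeff i
  map_add' a b := by
    funext i
    simp [Polynomial.add_modByMonic]
  map_smul' c a := by
    funext i
    simp [Polynomial.smul_modByMonic]

/-- The quasi-cyclic code `Q_q(f,g,h)`: the `F`-subspace of `F^n × F^n ≃ F^{2n}`
corresponding to the `R`-submodule of `R²` generated by `([f],[h f])` and `(0,[g])`. -/
def QCcode (n : ℕ) (f g h : F[X]) : Submodule F ((Fin n → F) × (Fin n → F)) where
  carrier := {v | ∃ a b : F[X], v = (vecOf n (a * f), vecOf n (a * h * f + b * g))}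
  zero_mem' := ⟨0, 0, by simp; rfl⟩
  add_mem' := by
    rintro v w ⟨a1, b1, rfl⟩ ⟨a2, b2, rfl⟩
    refine ⟨a1 + a2, b1 + b2, ?_⟩
    have h1 : (a1 + a2) * f = a1 * f + a2 * f := by ring
    have h2 : (a1 + a2) * h * f + (b1 + b2) * g
        = (a1 * h * f + b1 * g) + (a2 * h * f + b2 * g) := by ring
    rw [h1, h2, map_add (vecOf n) (a1 * f) (a2 * f),
      map_add (vecOf n) (a1 * h * f + b1 * g) (a2 * h * f + b2 * g)]
    rfl
  smul_mem' := by
    rintro c v ⟨a, b, rfl⟩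
    refine ⟨c • a, c • b, ?_⟩
    have h1 : (c • a) * f = c • (a * f) := smul_mul_assoc c a f
    have h2 : (c • a) * h * f + (c • b) * g = c • (a * h * f + b * g) := by
      rw [smul_add, smul_mul_assoc, smul_mul_assoc, smul_mul_assoc]
    rw [h1, h2, map_smul, map_smul]
    rfl

/-- Hamming weight of a vector. -/
def hWt {n : ℕ} (x : Fin n → F) : ℕ := Nat.card {i : Fin n // x i ≠ 0}

/-- Hamming weight of a vector of `F^{2n}` presented as a pair. -/
def hWt2 {n : ℕ} (v : (Fin n → F) × (Fin n → F)) : ℕ := hWt v.1 + hWt v.2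

/-- Symplectic weight. -/
def sWt {n : ℕ} (v : (Fin n → F) × (Fin n → F)) : ℕ :=
  Nat.card {i : Fin n // (v.1 i, v.2 i) ≠ (0, 0)}

/-- Euclidean inner product on `F^n`. -/
def eInn {n : ℕ} (x y : Fin n → F) : F := ∑ i, x i * y i

/-- Euclidean inner product on `F^{2n}`. -/
def eInn2 {n : ℕ} (x y : (Fin n → F) × (Fin n → F)) : F := eInn x.1 y.1 + eInn x.2 y.2

/-- Symplectic inner product on `F^{2n}`. -/
def sInn {n : ℕ} (x y : (Fin n → F) × (Fin n → F)) : F :=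
  ∑ i, (x.1 i * y.2 i - x.2 i * y.1 i)

/-- Hermitian inner product on `F^{2n}` (with respect to `x ↦ x^q`). -/
def hInn2 (q : ℕ) {n : ℕ} (x y : (Fin n → F) × (Fin n → F)) : F :=
  (∑ i, x.1 i ^ q * y.1 i) + ∑ i, x.2 i ^ q * y.2 i

def sDualSet {n : ℕ} (C : Set ((Fin n → F) × (Fin n → F))) : Set ((Fin n → F) × (Fin n → F)) :=
  {x | ∀ y ∈ C, sInn x y = 0}

def eDualSet {n : ℕ} (C : Set ((Fin n → F) × (Fin n → F))) : Set ((Fin n → F) × (Fin n → F)) :=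
  {x | ∀ y ∈ C, eInn2 x y = 0}

def hDualSet (q : ℕ) {n : ℕ} (C : Set ((Fin n → F) × (Fin n → F))) :
    Set ((Fin n → F) × (Fin n → F)) :=
  {x | ∀ y ∈ C, hInn2 q x y = 0}

/-- `x^n f(1/x)` for `f` of degree `< n`. -/
def barPoly (n : ℕ) (f : F[X]) : F[X] := ∑ i ∈ f.support, C (f.coeff i) * X ^ (n - i)

/-- `f^⊥ = x^{deg f'} f'(1/x)` where `f f' = x^n - 1`. -/
def perpPoly (n : ℕ) (f : F[X]) : F[X] := ((X ^ n - 1) /ₘ f).reverse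

/-- coefficientwise `q`-th power. -/
def polyQ (q : ℕ) (f : F[X]) : F[X] := ∑ i ∈ f.support, C (f.coeff i ^ q) * X ^ i

/-- minimum Hamming weight of the cyclic code generated by `[u]`. -/
def cycDist (n : ℕ) (u : F[X]) : ℕ :=
  sInf {w | ∃ a : F[X], vecOf n (a * u) ≠ 0 ∧ w = hWt (vecOf n (a * u))}

/-- The general QC set generated by `([u₁],[v₁])` and `([u₂],[v₂])`. -/
def QCspan (n : ℕ) (u₁ v₁ u₂ v₂ : F[X]) : Set ((Fin n → F) × (Fin n → F)) :=
  {w | ∃ a b : F[X], w = (vecOf n (a * u₁ + b * u₂), vecOf n (a * v₁ + b * v₂))}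

/-- The lower bound `d_q(f,g,h)` for the symplectic weight (a rational number). -/
def dSymp (q n : ℕ) (f g h : F[X]) : ℚ :=
  min (min (min (cycDist n g : ℚ)
    (cycDist n ((X ^ n - 1) / GCDMonoid.gcd (X ^ n - 1) h) : ℚ))
    (cycDist n (GCDMonoid.lcm f (g / GCDMonoid.gcd g h)) : ℚ))
    ((cycDist n f + cycDist n (GCDMonoid.gcd (h * f) g) + ((q : ℚ) - 1) * cycDist n (GCDMonoid.gcd f g)) / q)

/-- The lower bound `d_q^e(f,g,h)` for the minimum distance. -/
def dEucl (n : ℕ) (f g h : F[X]) : ℕ :=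
  min (min (min (cycDist n g)
    (cycDist n ((X ^ n - 1) / GCDMonoid.gcd (X ^ n - 1) h)))
    (cycDist n (GCDMonoid.lcm f (g / GCDMonoid.gcd g h))))
    (cycDist n f + cycDist n (GCDMonoid.gcd (h * f) g))

/-!
Identify `F^n` with `F[X]/(X^n - 1)`. The Euclidean product `⟨w, z⟩` is the constant term of
`z(x) · x^n w(1/x)` modulo `X^n - 1`, and this pairing is nondegenerate, so `(x₁, x₂)` is
orthogonal to `Q_q(f,g,h)` iff `X^n - 1` divides both `f · (x̄₁ + h x̄₂)` and `g · x̄₂`, where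
`x̄ = x^n x(1/x)`. Reflection preserves divisibility by `X^n - 1`, and `f^rev · f^⊥ = -(X^n - 1)`,
so these conditions become `f^⊥ ∣ x₁ + h̄ x₂` and `g^⊥ ∣ x₂`: membership in the code generated by
`(-h̄ g^⊥, g^⊥)` and `(f^⊥, 0)`.
-/

section CyclicReduction

variable {R : Type*} [CommRing R] {n : ℕ}

theorem monic_X_pow_sub_one (hn : 0 < n) : (X ^ n - 1 : R[X]).Monic := by
  simpa using monic_X_pow_sub_C (1 : R) hn.ne'

theorem natDegree_X_pow_sub_one [Nontrivial R] : (X ^ n - 1 : R[X]).natDegree = n := by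
  simpa using natDegree_X_pow_sub_C (n := n) (r := (1 : R))

theorem X_pow_modByMonic_X_pow_sub_one [Nontrivial R] (hn : 0 < n) (k : ℕ) :
    (X ^ k : R[X]) %ₘ (X ^ n - 1) = X ^ (k % n) := by
  have hM : (X ^ n - 1 : R[X]).Monic := monic_X_pow_sub_one hn
  rw [modByMonic_eq_of_dvd_sub hM, (modByMonic_eq_self_iff hM).2]
  · rw [degree_X_pow, degree_eq_natDegree hM.ne_zero, natDegree_X_pow_sub_one]
    exact_mod_cast Nat.mod_lt k hn
  · have hdvd : (X ^ n - 1 : R[X]) ∣ (X ^ n) ^ (k / n) - 1 := by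
      simpa using sub_dvd_pow_sub_pow ((X : R[X]) ^ n) 1 (k / n)
    have hk : (X ^ k : R[X]) - X ^ (k % n) = X ^ (k % n) * ((X ^ n) ^ (k / n) - 1) := by
      rw [← pow_mul, mul_sub, ← pow_add, Nat.mod_add_div, mul_one]
    rw [hk]
    exact hdvd.mul_left _

def constTermMod (n : ℕ) : R[X] →ₗ[R] R := (lcoeff R 0).comp (modByMonicHom (X ^ n - 1))

theorem constTermMod_apply (p : R[X]) : constTermMod n p = (p %ₘ (X ^ n - 1)).coeff 0 := rfl

theorem constTermMod_C_mul_X_pow [Nontrivial R] (hn : 0 < n) (c : R) (k : ℕ) :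
    constTermMod n (C c * X ^ k) = if k % n = 0 then c else 0 := by
  rw [constTermMod_apply, C_mul', smul_modByMonic, X_pow_modByMonic_X_pow_sub_one hn,
    coeff_smul, coeff_X_pow, smul_eq_mul, mul_ite, mul_one, mul_zero]
  simp only [eq_comm]

theorem constTermMod_modByMonic_mul (hn : 0 < n) (p q : R[X]) :
    constTermMod n (p %ₘ (X ^ n - 1) * q) = constTermMod n (p * q) := by
  have hdvd : (X ^ n - 1 : R[X]) ∣ p %ₘ (X ^ n - 1) * q - p * q := by
    rw [← sub_mul]
    exact (dvd_modByMonic_sub p _).mul_right q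
  rw [constTermMod_apply, constTermMod_apply,
    modByMonic_eq_of_dvd_sub (monic_X_pow_sub_one hn) hdvd]

end CyclicReduction

section Reflect

variable {R : Type*} [CommRing R] {n : ℕ}

theorem reflect_X_pow_sub_one : reflect n (X ^ n - 1 : R[X]) = -(X ^ n - 1) := by
  rw [reflect_sub, reflect_monomial, reflect_one, revAt_le le_rfl, Nat.sub_self, pow_zero,
    neg_sub]

theorem reflect_sum {ι : Type*} (s : Finset ι) (p : ι → R[X]) (N : ℕ) :
    reflect N (∑ i ∈ s, p i) = ∑ i ∈ s, reflect N (p i) :=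
  map_sum (AddMonoidHom.mk' (reflect N) fun p q => reflect_add p q N) p s

theorem natDegree_reflect_le_of_le {N : ℕ} {u : R[X]} (hu : u.natDegree ≤ N) :
    (reflect N u).natDegree ≤ N :=
  natDegree_reflect_le.trans (max_le le_rfl hu)

theorem reflect_mul_X_pow_add {u v h : R[X]} (hu : u.natDegree ≤ n)
    (hv : v.natDegree ≤ n) (hh : h.natDegree ≤ n) :
    reflect (n + n) (u * X ^ n + reflect n h * v) = reflect n u + h * reflect n v := by
  rw [reflect_add, reflect_mul _ _ hu (natDegree_X_pow_le n),
    reflect_mul _ _ (natDegree_reflect_le_of_le hh) hv, reflect_monomial, revAt_le le_rfl,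
    Nat.sub_self, pow_zero, mul_one, reflect_reflect]

variable [Nontrivial R]

theorem X_pow_sub_one_dvd_reflect (hn : 0 < n) {N : ℕ} {u : R[X]} (hN : n ≤ N)
    (hu : u.natDegree ≤ N) (h : (X ^ n - 1 : R[X]) ∣ u) : (X ^ n - 1 : R[X]) ∣ reflect N u := by
  obtain ⟨c, rfl⟩ := h
  rcases eq_or_ne c 0 with rfl | hc
  · simp
  have hc' : c.natDegree ≤ N - n := by
    rw [(monic_X_pow_sub_one hn).natDegree_mul' hc, natDegree_X_pow_sub_one] at hu
    omega
  rw [show N = n + (N - n) by omega,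
    reflect_mul _ _ natDegree_X_pow_sub_one.le hc', reflect_X_pow_sub_one]
  exact ⟨-reflect (N - n) c, by ring⟩

theorem X_pow_sub_one_dvd_reflect_iff (hn : 0 < n) {N : ℕ} {u : R[X]} (hN : n ≤ N)
    (hu : u.natDegree ≤ N) : (X ^ n - 1 : R[X]) ∣ reflect N u ↔ (X ^ n - 1 : R[X]) ∣ u := by
  refine ⟨fun h => ?_, X_pow_sub_one_dvd_reflect hn hN hu⟩
  simpa using X_pow_sub_one_dvd_reflect hn hN (natDegree_reflect_le_of_le hu) h

theorem X_pow_sub_one_dvd_mul_reflect_iff (hn : 0 < n) {k : ℕ} (hk : n ≤ k) (p : R[X])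
    {u : R[X]} (hu : u.natDegree ≤ k) :
    (X ^ n - 1 : R[X]) ∣ p * reflect k u ↔ (X ^ n - 1 : R[X]) ∣ p.reverse * u := by
  have hdeg : (p * reflect k u).natDegree ≤ p.natDegree + k :=
    natDegree_mul_le.trans (add_le_add le_rfl (natDegree_reflect_le_of_le hu))
  rw [← X_pow_sub_one_dvd_reflect_iff hn (hk.trans (Nat.le_add_left _ _)) hdeg,
    reflect_mul _ _ le_rfl (natDegree_reflect_le_of_le hu), reflect_reflect]
  rfl

end Reflect

section Perp

variable {K : Type*} [Field K] {n : ℕ}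

theorem reverse_mul_perpPoly {g : K[X]} (hg : g.Monic) (hgdvd : g ∣ X ^ n - 1) :
    g.reverse * perpPoly n g = -(X ^ n - 1) := by
  have hfac := modByMonic_add_div (X ^ n - 1 : K[X]) g
  rw [(modByMonic_eq_zero_iff_dvd hg).2 hgdvd, zero_add] at hfac
  rw [perpPoly, ← reverse_mul_of_domain, hfac, reverse, natDegree_X_pow_sub_one,
    reflect_X_pow_sub_one]

theorem perpPoly_dvd_X_pow_sub_one {g : K[X]} (hg : g.Monic)
    (hgdvd : g ∣ X ^ n - 1) : perpPoly n g ∣ X ^ n - 1 :=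
  ⟨-g.reverse, by linear_combination reverse_mul_perpPoly hg hgdvd⟩

theorem X_pow_sub_one_dvd_reverse_mul_iff {g : K[X]} (hg : g.Monic)
    (hgdvd : g ∣ X ^ n - 1) (Q : K[X]) :
    (X ^ n - 1 : K[X]) ∣ g.reverse * Q ↔ perpPoly n g ∣ Q := by
  rw [← neg_dvd, ← reverse_mul_perpPoly hg hgdvd,
    mul_dvd_mul_iff_left (reverse_eq_zero.not.2 hg.ne_zero)]

theorem X_pow_sub_one_dvd_mul_reflect_iff_perpPoly_dvd (hn : 0 < n) {g : K[X]} (hg : g.Monic)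
    (hgdvd : g ∣ X ^ n - 1) {v : K[X]} (hv : v.natDegree ≤ n) :
    (X ^ n - 1 : K[X]) ∣ g * reflect n v ↔ perpPoly n g ∣ v := by
  rw [X_pow_sub_one_dvd_mul_reflect_iff hn le_rfl g hv,
    X_pow_sub_one_dvd_reverse_mul_iff hg hgdvd]

theorem X_pow_sub_one_dvd_mul_reflect_add_iff (hn : 0 < n) {f : K[X]} (hf : f.Monic)
    (hfdvd : f ∣ X ^ n - 1) {u v h : K[X]} (hu : u.natDegree ≤ n) (hv : v.natDegree ≤ n)
    (hh : h.natDegree ≤ n) :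
    (X ^ n - 1 : K[X]) ∣ f * (reflect n u + h * reflect n v) ↔
      perpPoly n f ∣ u + reflect n h * v := by
  have hdeg : (u * X ^ n + reflect n h * v).natDegree ≤ n + n :=
    (natDegree_add_le _ _).trans (max_le
      (natDegree_mul_le.trans (by rw [natDegree_X_pow]; omega))
      (natDegree_mul_le.trans (add_le_add (natDegree_reflect_le_of_le hh) hv)))
  rw [← reflect_mul_X_pow_add hu hv hh, X_pow_sub_one_dvd_mul_reflect_iff hn (by omega) f hdeg,
    ← X_pow_sub_one_dvd_reverse_mul_iff hf hfdvd]
  exact dvd_iff_dvd_of_dvd_sub ⟨f.reverse * u, by ring⟩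

theorem barPoly_eq_reflect {h : K[X]} (hh : h.natDegree ≤ n) : barPoly n h = reflect n h := by
  conv_rhs => rw [h.as_sum_support_C_mul_X_pow, reflect_sum]
  refine Finset.sum_congr rfl fun i hi => ?_
  rw [reflect_C_mul_X_pow, revAt_le ((le_natDegree_of_mem_supp i hi).trans hh)]

end Perp

section Vectors

variable {K : Type*} [Field K] {n : ℕ}

def polyOfVec (w : Fin n → K) : K[X] := ∑ i, C (w i) * X ^ (i : ℕ)

theorem coeff_polyOfVec (w : Fin n → K) (j : ℕ) :
    (polyOfVec w).coeff j = if h : j < n then w ⟨j, h⟩ else 0 := by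
  simp only [polyOfVec, finsetSum_coeff, coeff_C_mul, coeff_X_pow, mul_ite, mul_one, mul_zero]
  split_ifs with h
  · rw [Finset.sum_eq_single ⟨j, h⟩ (fun i _ hi => if_neg fun hj => hi (Fin.ext hj.symm))
      (by simp), if_pos rfl]
  · exact Finset.sum_eq_zero fun i _ => if_neg fun hj => h (by have := i.isLt; omega)

theorem degree_polyOfVec_lt (w : Fin n → K) : (polyOfVec w).degree < n :=
  (degree_lt_iff_coeff_zero _ _).2 fun m hm => by
    rw [coeff_polyOfVec, dif_neg (not_lt.2 hm)]

theorem natDegree_polyOfVec_le (w : Fin n → K) : (polyOfVec w).natDegree ≤ n :=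
  natDegree_le_of_degree_le (degree_polyOfVec_lt w).le

theorem vecOf_polyOfVec (hn : 0 < n) (w : Fin n → K) : vecOf n (polyOfVec w) = w := by
  have hM : (X ^ n - 1 : K[X]).Monic := monic_X_pow_sub_one hn
  funext i
  change (polyOfVec w %ₘ (X ^ n - 1)).coeff i = w i
  rw [(modByMonic_eq_self_iff hM).2, coeff_polyOfVec, dif_pos i.isLt]
  rw [degree_eq_natDegree hM.ne_zero, natDegree_X_pow_sub_one]
  exact degree_polyOfVec_lt w

theorem polyOfVec_vecOf (hn : 0 < n) (u : K[X]) : polyOfVec (vecOf n u) = u %ₘ (X ^ n - 1) := by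
  have hM : (X ^ n - 1 : K[X]).Monic := monic_X_pow_sub_one hn
  ext j
  rw [coeff_polyOfVec]
  split_ifs with hj
  · rfl
  · refine (coeff_eq_zero_of_degree_lt ((degree_modByMonic_lt u hM).trans_le ?_)).symm
    rw [degree_eq_natDegree hM.ne_zero, natDegree_X_pow_sub_one]
    exact_mod_cast not_lt.1 hj

theorem add_sub_mod_eq_zero_iff {i j : ℕ} (hi : i < n) (hj : j < n) :
    (i + (n - j)) % n = 0 ↔ i = j := by
  rcases le_or_gt j i with hji | hij
  · rw [show i + (n - j) = i - j + n by omega, Nat.add_mod_right, Nat.mod_eq_of_lt (by omega)]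
    omega
  · rw [Nat.mod_eq_of_lt (by omega)]
    omega

theorem eInn_eq_constTermMod (hn : 0 < n) (w z : Fin n → K) :
    eInn w z = constTermMod n (polyOfVec z * reflect n (polyOfVec w)) := by
  have hterm : ∀ i j : Fin n,
      constTermMod n (C (z i) * X ^ (i : ℕ) * reflect n (C (w j) * X ^ (j : ℕ))) =
        if i = j then w i * z i else 0 := by
    intro i j
    rw [reflect_C_mul_X_pow, revAt_le j.isLt.le, mul_mul_mul_comm, ← C_mul, ← pow_add,
      constTermMod_C_mul_X_pow hn]
    simp only [add_sub_mod_eq_zero_iff i.isLt j.isLt, Fin.val_inj]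
    split_ifs with hij
    · rw [hij, mul_comm]
    · rfl
  simp only [eInn, polyOfVec, reflect_sum, Finset.sum_mul_sum, map_sum, hterm,
    Finset.sum_ite_eq, Finset.mem_univ, if_true]

theorem eInn_vecOf (hn : 0 < n) (w : Fin n → K) (u : K[X]) :
    eInn w (vecOf n u) = constTermMod n (u * reflect n (polyOfVec w)) := by
  rw [eInn_eq_constTermMod hn, polyOfVec_vecOf hn, constTermMod_modByMonic_mul hn]

theorem forall_constTermMod_mul_eq_zero_iff (hn : 0 < n) (Q : K[X]) :
    (∀ a, constTermMod n (a * Q) = 0) ↔ (X ^ n - 1 : K[X]) ∣ Q := by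
  have hM : (X ^ n - 1 : K[X]).Monic := monic_X_pow_sub_one hn
  refine ⟨fun h => ?_, fun ⟨c, hc⟩ a => ?_⟩
  · have hvec : vecOf n Q = 0 := funext fun j => calc
      vecOf n Q j = eInn (Pi.single j 1) (vecOf n Q) := by simp [eInn, Pi.single_apply]
      _ = 0 := by rw [eInn_vecOf hn, mul_comm, h]
    rw [← modByMonic_eq_zero_iff_dvd hM, ← polyOfVec_vecOf hn, hvec]
    simp [polyOfVec]
  · rw [constTermMod_apply, hc, mul_left_comm,
      (modByMonic_eq_zero_iff_dvd hM).2 (dvd_mul_right _ _), coeff_zero]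

end Vectors

section QuasiCyclic

variable {K : Type*} [Field K] {n : ℕ}

theorem mem_eDualSet_QCcode_iff (hn : 0 < n) (f g h : K[X]) (x : (Fin n → K) × (Fin n → K)) :
    x ∈ eDualSet (QCcode n f g h : Set ((Fin n → K) × (Fin n → K))) ↔
      (X ^ n - 1 : K[X]) ∣ f * (reflect n (polyOfVec x.1) + h * reflect n (polyOfVec x.2)) ∧
        (X ^ n - 1 : K[X]) ∣ g * reflect n (polyOfVec x.2) := by
  have key : ∀ a b : K[X], eInn2 x (vecOf n (a * f), vecOf n (a * h * f + b * g)) =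
      constTermMod n (a * (f * (reflect n (polyOfVec x.1) + h * reflect n (polyOfVec x.2))) +
        b * (g * reflect n (polyOfVec x.2))) := by
    intro a b
    rw [eInn2, eInn_vecOf hn, eInn_vecOf hn, ← map_add]
    congr 1
    ring
  rw [← forall_constTermMod_mul_eq_zero_iff hn, ← forall_constTermMod_mul_eq_zero_iff hn]
  constructor
  · intro hx
    exact ⟨fun a => by simpa using (key a 0).symm.trans (hx _ ⟨a, 0, rfl⟩),
      fun b => by simpa using (key 0 b).symm.trans (hx _ ⟨0, b, rfl⟩)⟩
  · rintro ⟨hA, hB⟩ _ ⟨a, b, rfl⟩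
    rw [key, map_add, hA, hB, add_zero]

theorem mem_QCspan_iff (hn : 0 < n) {fp gp : K[X]} (hfp : fp ∣ X ^ n - 1)
    (hgp : gp ∣ X ^ n - 1) (r : K[X]) (x : (Fin n → K) × (Fin n → K)) :
    x ∈ QCspan n (-r * gp) gp fp 0 ↔
      fp ∣ polyOfVec x.1 + r * polyOfVec x.2 ∧ gp ∣ polyOfVec x.2 := by
  obtain ⟨x₁, x₂⟩ := x
  constructor
  · rintro ⟨a, b, hx⟩
    obtain ⟨rfl, rfl⟩ := Prod.mk.inj hx
    rw [polyOfVec_vecOf hn, polyOfVec_vecOf hn]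
    set U₁ := a * (-r * gp) + b * fp
    set U₂ := a * gp + b * 0
    have h₁ := dvd_modByMonic_sub U₁ (X ^ n - 1)
    have h₂ := dvd_modByMonic_sub U₂ (X ^ n - 1)
    constructor
    · have hdiff : (X ^ n - 1 : K[X]) ∣
          (U₁ %ₘ (X ^ n - 1) + r * (U₂ %ₘ (X ^ n - 1))) - (U₁ + r * U₂) := by
        convert dvd_add h₁ (h₂.mul_left r) using 1
        ring
      rw [dvd_iff_dvd_of_dvd_sub (hfp.trans hdiff)]
      exact ⟨b, by simp only [U₁, U₂]; ring⟩
    · rw [dvd_iff_dvd_of_dvd_sub (hgp.trans h₂)]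
      exact ⟨a, by simp only [U₂]; ring⟩
  · rintro ⟨⟨b, hb⟩, ⟨a, ha⟩⟩
    dsimp only at hb ha
    refine ⟨a, b, ?_⟩
    rw [show a * (-r * gp) + b * fp = polyOfVec x₁ by linear_combination r * ha - hb,
      show a * gp + b * 0 = polyOfVec x₂ by linear_combination -ha,
      vecOf_polyOfVec hn, vecOf_polyOfVec hn]

end QuasiCyclic

theorem stmt12_general (n : ℕ) (hn : 0 < n) (f g h : F[X])
    (hf : f.Monic) (hg : g.Monic)
    (hhd : h.degree < n)
    (hfdvd : f ∣ X ^ n - 1) (hgdvd : g ∣ X ^ n - 1) :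
    eDualSet (QCcode n f g h : Set ((Fin n → F) × (Fin n → F))) =
      QCspan n (-(barPoly n h) * perpPoly n g) (perpPoly n g) (perpPoly n f) 0 := by
  have hh : h.natDegree ≤ n := natDegree_le_of_degree_le hhd.le
  ext x
  rw [mem_eDualSet_QCcode_iff hn, mem_QCspan_iff hn (perpPoly_dvd_X_pow_sub_one hf hfdvd)
      (perpPoly_dvd_X_pow_sub_one hg hgdvd), barPoly_eq_reflect hh,
    X_pow_sub_one_dvd_mul_reflect_add_iff hn hf hfdvd (natDegree_polyOfVec_le _)
      (natDegree_polyOfVec_le _) hh,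
    X_pow_sub_one_dvd_mul_reflect_iff_perpPoly_dvd hn hg hgdvd (natDegree_polyOfVec_le _)]

/-- the Euclidean dual of `Q_q(f,g,h)` is the QC code generated by
`([-hbar g^⊥], [g^⊥])` and `([f^⊥], 0)`. -/
theorem stmt12 [Fintype F] (n : ℕ) (hn : 0 < n) (f g h : F[X])
    (hf : f.Monic) (hg : g.Monic) (hh : h.Monic)
    (hfd : f.degree < n) (hgd : g.degree < n) (hhd : h.degree < n)
    (hfdvd : f ∣ X ^ n - 1) (hgdvd : g ∣ X ^ n - 1) :
    eDualSet (QCcode n f g h : Set ((Fin n → F) × (Fin n → F))) =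
      QCspan n (-(barPoly n h) * perpPoly n g) (perpPoly n g) (perpPoly n f) 0 :=
  stmt12_general n hn f g h hf hg hhd hfdvd hgdvd

end
end

section
/- Assume f(x) divides g(x), g(x) divides g^perp(x), and g^perp(x) divides f^perp(x). Then the quasi-cyclic code Q := Q_q(f,g,h) satisfies: Q^{perp} is contained in Q; the dimension of Q is 2n - deg(f(x)) - deg(g(x)) (so dim Q - dim Q^{perp} = 2n - 2 deg(f(x)) - 2 deg(g(x))); and every nonzero codeword of Q has Hamming weight at least d_q^e(f,g,h), the minimum of d([g(x)]); d([(x^n-1)/gcd(x^n-1, h(x))]); d([lcm(f(x), g(x)/gcd(g(x), h(x)))]); and d([f(x)]) + d([gcd(h(x)f(x), g(x))]). -/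
open Polynomial Finset

noncomputable section

variable {F : Type*} [Field F] [DecidableEq F]

/-!
Identify `F^n` with `R = F[x]/(x^n - 1)` through coefficients. The Euclidean inner product becomes
`⟨a, b⟩ = [x^0] (a · b̄)`, where `b̄(x) = b(x⁻¹)`, and this pairing is nondegenerate. So `(u, v)` is
orthogonal to `Q` iff `v · ḡ = 0` and `(u + v · h̄) · f̄ = 0`. Conjugating, `v̄` is annihilated
by `g`, hence is a multiple of `(x^n - 1)/g`, and `v` is a multiple of its reciprocal `g^⊥`;
likewise `u + v · h̄` is a multiple of `f^⊥`. The chain `f ∣ g ∣ g^⊥ ∣ f^⊥` then puts `u` in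
`(g) ⊆ (f)` and `v - h u` in `(g)`, which is membership in `Q = {(u, v) | u ∈ (f), v - h u ∈ (g)}`.

The same description shows that the shear `(u, v) ↦ (u, v - h u)` maps `Q` onto `(f) × (g)`, so
`dim Q = (n - deg f) + (n - deg g)`. For the weight bound write a codeword as `(a f, a h f + b g)`:
if `a f = 0` it is a word of `(g)`; if only the second half vanishes then `g ∣ a h f`, so `a f` is a
word of `(lcm(f, g / gcd(g, h)))`; otherwise the halves are words of `(f)` and `(gcd(h f, g))`.
-/

open Polynomial AdjoinRoot

namespace Polynomial

theorem monic_X_pow_sub_one (R : Type*) [Ring R] (n : ℕ) [NeZero n] :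
    (X ^ n - 1 : R[X]).Monic := by
  simpa using monic_X_pow_sub_C (1 : R) (NeZero.ne n)

theorem natDegree_X_pow_sub_one (R : Type*) [Ring R] [Nontrivial R] (n : ℕ) :
    (X ^ n - 1 : R[X]).natDegree = n := by
  simpa using natDegree_X_pow_sub_C (n := n) (r := (1 : R))

theorem dvd_mul_iff_divByMonic_dvd {R : Type*} [CommRing R] [IsDomain R] {P u a : R[X]}
    (hu : u.Monic) (hP : u ∣ P) : P ∣ a * u ↔ P /ₘ u ∣ a := by
  have hPu : u * (P /ₘ u) = P := by
    simpa [(modByMonic_eq_zero_iff_dvd hu).mpr hP] using modByMonic_add_div P u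
  rw [mul_comm a]
  conv_lhs => rw [← hPu]
  exact mul_dvd_mul_iff_left hu.ne_zero

end Polynomial

theorem div_gcd_dvd_of_dvd_mul {R : Type*} [EuclideanDomain R] [GCDMonoid R] {a b c : R}
    (ha : a ≠ 0) (h : a ∣ c * b) : a / gcd a b ∣ c := by
  have hd : gcd a b ≠ 0 := gcd_ne_zero_of_left ha
  refine (isCoprime_div_gcd_div_gcd_of_gcd_ne_zero hd).dvd_of_dvd_mul_right ?_
  rwa [← mul_dvd_mul_iff_left hd, EuclideanDomain.mul_div_cancel' hd (gcd_dvd_left a b),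
    mul_left_comm, EuclideanDomain.mul_div_cancel' hd (gcd_dvd_right a b)]

abbrev CyclicRing (K : Type*) [Field K] (n : ℕ) := AdjoinRoot (X ^ n - 1 : K[X])

namespace CyclicRing

variable {K : Type*} [Field K] {n : ℕ}

theorem root_pow_eq_one : root (X ^ n - 1 : K[X]) ^ n = 1 := by
  have h := mk_self (f := (X ^ n - 1 : K[X]))
  rwa [map_sub, map_pow, mk_X, map_one, sub_eq_zero] at h

theorem mem_span_divByMonic_of_mul_eq_zero {u : K[X]} (hu : u.Monic) (hdvd : u ∣ X ^ n - 1)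
    {x : CyclicRing K n} (hx : x * mk _ u = 0) :
    x ∈ Ideal.span {mk (X ^ n - 1) ((X ^ n - 1) /ₘ u)} := by
  obtain ⟨p, rfl⟩ := mk_surjective x
  rw [← map_mul, mk_eq_zero, dvd_mul_iff_divByMonic_dvd hu hdvd] at hx
  obtain ⟨t, rfl⟩ := hx
  rw [map_mul]
  exact Ideal.mul_mem_right _ _ (Ideal.mem_span_singleton_self _)

theorem finrank_span_mk {u : K[X]} (hu : u.Monic) (hdvd : u ∣ X ^ n - 1) :
    Module.finrank K ((Ideal.span {mk (X ^ n - 1) u}).restrictScalars K) = n - u.natDegree := by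
  let φ : K[X] →ₗ[K] CyclicRing K n := (mkₐ _).toLinearMap ∘ₗ LinearMap.mulRight K u
  have hrange : LinearMap.range φ = (Ideal.span {mk (X ^ n - 1) u}).restrictScalars K := by
    ext x
    simp only [LinearMap.mem_range, Submodule.restrictScalars_mem, Ideal.mem_span_singleton', φ,
      LinearMap.coe_comp, Function.comp_apply, LinearMap.mulRight_apply, AlgHom.toLinearMap_apply,
      coe_mkₐ, map_mul]
    constructor
    · rintro ⟨a, rfl⟩
      exact ⟨mk _ a, rfl⟩
    · rintro ⟨a, rfl⟩
      obtain ⟨p, rfl⟩ := mk_surjective a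
      exact ⟨p, rfl⟩
  have hker : LinearMap.ker φ = (Ideal.span {(X ^ n - 1 : K[X]) /ₘ u}).restrictScalars K := by
    ext a
    rw [LinearMap.mem_ker, Submodule.restrictScalars_mem, Ideal.mem_span_singleton,
      ← dvd_mul_iff_divByMonic_dvd hu hdvd, ← mk_eq_zero]
    rfl
  rw [← hrange, ← (LinearMap.quotKerEquivRange φ).finrank_eq, hker,
    (Submodule.Quotient.restrictScalarsEquiv K _).finrank_eq, finrank_quotient_span_eq_natDegree,
    natDegree_divByMonic _ hu, natDegree_X_pow_sub_one]

variable [NeZero n]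

def basis (K : Type*) [Field K] (n : ℕ) [NeZero n] : Module.Basis (Fin n) K (CyclicRing K n) :=
  (powerBasis' (monic_X_pow_sub_one K n)).basis.reindex (finCongr (natDegree_X_pow_sub_one K n))

theorem basis_apply (i : Fin n) : basis K n i = root (X ^ n - 1 : K[X]) ^ (i : ℕ) := by
  simp only [basis, Module.Basis.reindex_apply, PowerBasis.basis_eq_pow, powerBasis'_gen]
  rfl

instance : Module.Finite K (CyclicRing K n) := .of_basis (basis K n)

def toVec (K : Type*) [Field K] (n : ℕ) [NeZero n] : CyclicRing K n ≃ₗ[K] (Fin n → K) :=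
  (basis K n).equivFun

theorem toVec_mk (p : K[X]) : toVec K n (mk _ p) = vecOf n p := by
  funext i
  simp only [toVec, basis, Module.Basis.equivFun_apply, Module.Basis.repr_reindex,
    Finsupp.mapDomain_equiv_apply, vecOf, LinearMap.coe_mk, AddHom.coe_mk]
  rfl

def rootInv : CyclicRing K n := root (X ^ n - 1 : K[X]) ^ (n - 1)

theorem root_mul_rootInv : root (X ^ n - 1 : K[X]) * rootInv = 1 := by
  rw [rootInv, ← pow_succ', Nat.sub_add_cancel NeZero.one_le, root_pow_eq_one]

theorem rootInv_pow {k : ℕ} (hk : k ≤ n) :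
    (rootInv : CyclicRing K n) ^ k = root (X ^ n - 1 : K[X]) ^ (n - k) := by
  calc (rootInv : CyclicRing K n) ^ k
      = rootInv ^ k * (root (X ^ n - 1 : K[X]) ^ k * root (X ^ n - 1 : K[X]) ^ (n - k)) := by
        rw [← pow_add, Nat.add_sub_cancel' hk, root_pow_eq_one, mul_one]
    _ = root (X ^ n - 1 : K[X]) ^ (n - k) := by
        rw [← mul_assoc, ← mul_pow, mul_comm rootInv, root_mul_rootInv, one_pow, one_mul]

def conj : CyclicRing K n →ₐ[K] CyclicRing K n :=
  liftAlgHom (X ^ n - 1) (Algebra.ofId K _) rootInv <| by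
    simp [rootInv_pow le_rfl]

theorem conj_root : conj (root (X ^ n - 1 : K[X])) = rootInv :=
  liftAlgHom_root _ _ _ _

theorem conj_conj (x : CyclicRing K n) : conj (conj x) = x := by
  have h : (conj : CyclicRing K n →ₐ[K] CyclicRing K n).comp conj = AlgHom.id K _ := by
    refine algHom_ext ?_
    rw [AlgHom.comp_apply, conj_root, rootInv, map_pow, conj_root,
      rootInv_pow (Nat.sub_le n 1), Nat.sub_sub_self NeZero.one_le, pow_one, AlgHom.id_apply]
  exact DFunLike.congr_fun h x

theorem conj_mk (p : K[X]) :
    conj (mk (X ^ n - 1) p) = mk (X ^ n - 1) p.reverse * rootInv ^ p.natDegree := by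
  let _ : Invertible (rootInv : CyclicRing K n) :=
    invertibleOfRightInverse _ (root _) (by rw [mul_comm, root_mul_rootInv])
  have h := eval₂_reverse_mul_pow (algebraMap K (CyclicRing K n)) rootInv p
  rw [invOf_eq_left_inv root_mul_rootInv, ← aeval_def, aeval_eq] at h
  rw [h]
  rfl

def constCoeff (K : Type*) [Field K] (n : ℕ) [NeZero n] : CyclicRing K n →ₗ[K] K :=
  (lcoeff K 0).comp (modByMonicHom (monic_X_pow_sub_one K n))

theorem constCoeff_root_pow {k : ℕ} (hk : k < n) :
    constCoeff K n (root (X ^ n - 1 : K[X]) ^ k) = if k = 0 then 1 else 0 := by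
  have hdeg : (X ^ k : K[X]).degree < (X ^ n - 1 : K[X]).degree := by
    rw [degree_X_pow, ← C_1, degree_X_pow_sub_C (NeZero.pos n)]
    exact_mod_cast hk
  rw [← mk_X, ← map_pow, constCoeff, LinearMap.comp_apply, modByMonicHom_mk,
    (modByMonic_eq_self_iff (monic_X_pow_sub_one K n)).mpr hdeg, lcoeff_apply, coeff_X_pow]
  simp only [eq_comm]

theorem constCoeff_basis_mul_conj_basis (i j : Fin n) :
    constCoeff K n (basis K n i * conj (basis K n j)) = if i = j then 1 else 0 := by
  rw [basis_apply, basis_apply, map_pow, conj_root]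
  rcases le_or_gt (j : ℕ) i with hji | hij
  · have h : root (X ^ n - 1 : K[X]) ^ (i : ℕ) * rootInv ^ (j : ℕ) = root _ ^ (i - j : ℕ) := by
      rw [← Nat.sub_add_cancel hji, pow_add, mul_assoc, ← mul_pow, root_mul_rootInv, one_pow,
        mul_one, Nat.add_sub_cancel]
    rw [h, constCoeff_root_pow (by omega)]
    exact if_congr (by rw [Fin.ext_iff]; omega) rfl rfl
  · have h : root (X ^ n - 1 : K[X]) ^ (i : ℕ) * rootInv ^ (j : ℕ)
        = root _ ^ (n - (j - i) : ℕ) := by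
      rw [← rootInv_pow (by omega), ← Nat.sub_add_cancel hij.le, pow_add, mul_left_comm,
        ← mul_pow, root_mul_rootInv, one_pow, mul_one, Nat.add_sub_cancel]
    rw [h, constCoeff_root_pow (by omega), if_neg (by omega), if_neg (by omega)]

theorem eInn_toVec (x y : CyclicRing K n) :
    eInn (toVec K n x) (toVec K n y) = constCoeff K n (x * conj y) := by
  conv_rhs => rw [← (basis K n).sum_equivFun x, ← (basis K n).sum_equivFun y]
  simp only [map_sum, map_smul, Finset.sum_mul, Finset.mul_sum, smul_mul_smul_comm,
    constCoeff_basis_mul_conj_basis, smul_eq_mul, mul_ite, mul_one, mul_zero, Finset.sum_ite_eq',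
    Finset.mem_univ, if_true]
  rfl

theorem eq_zero_of_forall_constCoeff_conj_mul {w : CyclicRing K n}
    (h : ∀ c, constCoeff K n (conj c * w) = 0) : w = 0 := by
  refine (toVec K n).injective (funext fun i => ?_)
  have hi := h ((toVec K n).symm (Pi.single i 1))
  rw [mul_comm, ← eInn_toVec, LinearEquiv.apply_symm_apply] at hi
  simpa [eInn, Pi.single_apply] using hi

theorem mem_span_perpPoly_of_mul_conj_eq_zero {u : K[X]} (hu : u.Monic) (hdvd : u ∣ X ^ n - 1)
    {x : CyclicRing K n} (hx : x * conj (mk _ u) = 0) :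
    x ∈ Ideal.span {mk (X ^ n - 1) (perpPoly n u)} := by
  have h : conj x * mk _ u = 0 := by simpa [conj_conj] using congrArg conj hx
  obtain ⟨t, ht⟩ := Ideal.mem_span_singleton'.mp (mem_span_divByMonic_of_mul_eq_zero hu hdvd h)
  rw [← conj_conj x, ← ht, map_mul, conj_mk, perpPoly, mul_left_comm]
  exact Ideal.mul_mem_right _ _ (Ideal.mem_span_singleton_self _)

end CyclicRing

section QuasiCyclic

open CyclicRing

variable {K : Type*} [Field K] {n : ℕ}

theorem hWt_zero : hWt (0 : Fin n → K) = 0 := by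
  simp [hWt]

theorem cycDist_le_hWt {u p : K[X]} (hup : u ∣ p) (hp : vecOf n p ≠ 0) :
    cycDist n u ≤ hWt (vecOf n p) := by
  obtain ⟨a, rfl⟩ := hup
  exact Nat.sInf_le ⟨a, by rwa [mul_comm], by rw [mul_comm]⟩

variable [NeZero n]

theorem vecOf_eq_zero_iff {p : K[X]} : vecOf n p = 0 ↔ X ^ n - 1 ∣ p := by
  rw [← toVec_mk, LinearEquiv.map_eq_zero_iff, mk_eq_zero]

theorem vecOf_eq_vecOf_of_dvd_sub {p q : K[X]} (h : X ^ n - 1 ∣ p - q) :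
    vecOf n p = vecOf n q := by
  rw [← toVec_mk, ← toVec_mk, mk_eq_mk.mpr h]

theorem mem_QCcode_iff {f g h : K[X]} {v : (Fin n → K) × (Fin n → K)} :
    v ∈ QCcode n f g h ↔ ∃ x ∈ Ideal.span {mk (X ^ n - 1) f}, ∃ z ∈ Ideal.span {mk (X ^ n - 1) g},
      v = (toVec K n x, toVec K n (mk _ h * x + z)) := by
  constructor
  · rintro ⟨a, b, rfl⟩
    refine ⟨mk _ a * mk _ f, Ideal.mul_mem_left _ _ (Ideal.mem_span_singleton_self _),
      mk _ b * mk _ g, Ideal.mul_mem_left _ _ (Ideal.mem_span_singleton_self _), ?_⟩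
    simp only [← toVec_mk, map_add, map_mul]
    ring_nf
  · rintro ⟨x, hx, z, hz, rfl⟩
    obtain ⟨A, rfl⟩ := Ideal.mem_span_singleton'.mp hx
    obtain ⟨B, rfl⟩ := Ideal.mem_span_singleton'.mp hz
    obtain ⟨a, rfl⟩ := mk_surjective A
    obtain ⟨b, rfl⟩ := mk_surjective B
    refine ⟨a, b, ?_⟩
    simp only [← toVec_mk, map_add, map_mul]
    ring_nf

theorem finrank_QCcode {f g h : K[X]} (hf : f.Monic) (hg : g.Monic)
    (hfdvd : f ∣ X ^ n - 1) (hgdvd : g ∣ X ^ n - 1) :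
    Module.finrank K (QCcode n f g h) = 2 * n - f.natDegree - g.natDegree := by
  set I := (Ideal.span {mk (X ^ n - 1) f}).restrictScalars K
  set J := (Ideal.span {mk (X ^ n - 1) g}).restrictScalars K
  let Ψ : I × J →ₗ[K] (Fin n → K) × (Fin n → K) :=
    ((toVec K n).skewProd (toVec K n)
      ((toVec K n).toLinearMap ∘ₗ LinearMap.mulLeft K (mk _ h))).toLinearMap ∘ₗ
      I.subtype.prodMap J.subtype
  have hinj : Function.Injective Ψ := by
    simp only [Ψ, LinearMap.coe_comp, LinearEquiv.coe_coe, LinearMap.coe_prodMap]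
    exact (LinearEquiv.injective _).comp
      (Prod.map_injective.mpr ⟨I.injective_subtype, J.injective_subtype⟩)
  have hrange : LinearMap.range Ψ = QCcode n f g h := by
    ext v
    rw [mem_QCcode_iff, LinearMap.mem_range]
    constructor
    · rintro ⟨⟨⟨x, hx⟩, ⟨z, hz⟩⟩, rfl⟩
      exact ⟨x, hx, z, hz, by simp [Ψ, add_comm]⟩
    · rintro ⟨x, hx, z, hz, rfl⟩
      exact ⟨(⟨x, hx⟩, ⟨z, hz⟩), by simp [Ψ, add_comm]⟩
  have hfn := natDegree_le_of_dvd hfdvd (monic_X_pow_sub_one K n).ne_zero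
  have hgn := natDegree_le_of_dvd hgdvd (monic_X_pow_sub_one K n).ne_zero
  rw [natDegree_X_pow_sub_one] at hfn hgn
  rw [← hrange, LinearMap.finrank_range_of_inj hinj, Module.finrank_prod, finrank_span_mk hf hfdvd,
    finrank_span_mk hg hgdvd]
  omega

theorem eDualSet_QCcode_subset {f g h : K[X]} (hf : f.Monic) (hg : g.Monic)
    (hfdvd : f ∣ X ^ n - 1) (hgdvd : g ∣ X ^ n - 1) (hfg : f ∣ g) (hg_perp : g ∣ perpPoly n g)
    (hperp : perpPoly n g ∣ perpPoly n f) :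
    eDualSet (QCcode n f g h : Set ((Fin n → K) × (Fin n → K))) ⊆ QCcode n f g h := by
  intro v hv
  set x := (toVec K n).symm v.1
  set y := (toVec K n).symm v.2
  have hv_eq : v = (toVec K n x, toVec K n y) := by simp [x, y]
  -- orthogonality to the codeword `(A f, A h f + B g)`, regrouped by `conj A` and `conj B`
  have horth : ∀ A B : CyclicRing K n, constCoeff K n
      (conj A * ((x + y * conj (mk _ h)) * conj (mk _ f)) + conj B * (y * conj (mk _ g))) = 0 := by
    intro A B
    have hAB := hv _ (mem_QCcode_iff.mpr ⟨A * mk _ f, Ideal.mul_mem_left _ _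
      (Ideal.mem_span_singleton_self _), B * mk _ g, Ideal.mul_mem_left _ _
      (Ideal.mem_span_singleton_self _), rfl⟩)
    rw [hv_eq, eInn2, eInn_toVec, eInn_toVec, ← map_add] at hAB
    rw [← hAB]
    congr 1
    simp only [map_mul, map_add]
    ring
  have hy : y ∈ Ideal.span {mk (X ^ n - 1) (perpPoly n g)} :=
    mem_span_perpPoly_of_mul_conj_eq_zero hg hgdvd
      (eq_zero_of_forall_constCoeff_conj_mul fun B => by simpa using horth 0 B)
  have hxy : x + y * conj (mk _ h) ∈ Ideal.span {mk (X ^ n - 1) (perpPoly n f)} :=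
    mem_span_perpPoly_of_mul_conj_eq_zero hf hfdvd
      (eq_zero_of_forall_constCoeff_conj_mul fun A => by simpa using horth A 0)
  have span_le {p q : K[X]} (hpq : p ∣ q) :
      Ideal.span {mk (X ^ n - 1) q} ≤ Ideal.span {mk (X ^ n - 1) p} :=
    Ideal.span_singleton_le_span_singleton.mpr (map_dvd _ hpq)
  have hx : x ∈ Ideal.span {mk (X ^ n - 1) (perpPoly n g)} := by
    simpa using Ideal.sub_mem _ (span_le hperp hxy) (Ideal.mul_mem_right (conj (mk _ h)) _ hy)
  have hxg := span_le hg_perp hx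
  refine mem_QCcode_iff.mpr ⟨x, span_le hfg hxg, y - mk _ h * x,
    Ideal.sub_mem _ (span_le hg_perp hy) (Ideal.mul_mem_left _ _ hxg), ?_⟩
  rw [add_sub_cancel, hv_eq]

theorem dEucl_le_hWt2 [DecidableEq K] {f g h : K[X]} (hgdvd : g ∣ X ^ n - 1)
    {v : (Fin n → K) × (Fin n → K)} (hv : v ∈ QCcode n f g h) (hv0 : v ≠ 0) :
    dEucl n f g h ≤ hWt2 v := by
  obtain ⟨a, b, rfl⟩ := hv
  rw [hWt2]
  by_cases h1 : vecOf n (a * f) = 0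
  · have h2 : vecOf n (a * h * f + b * g) = vecOf n (b * g) := by
      refine vecOf_eq_vecOf_of_dvd_sub ?_
      rw [add_sub_cancel_right, mul_right_comm]
      exact dvd_mul_of_dvd_left (vecOf_eq_zero_iff.mp h1) h
    rw [h1, h2] at hv0 ⊢
    have hbg : vecOf n (b * g) ≠ 0 := fun h0 => hv0 (by rw [h0]; rfl)
    calc dEucl n f g h ≤ cycDist n g := by unfold dEucl; omega
      _ ≤ hWt (vecOf n (b * g)) := cycDist_le_hWt (dvd_mul_left g b) hbg
      _ = hWt (0 : Fin n → K) + hWt (vecOf n (b * g)) := by rw [hWt_zero, zero_add]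
  by_cases h2 : vecOf n (a * h * f + b * g) = 0
  · have hg0 : g ≠ 0 := ne_zero_of_dvd_ne_zero (monic_X_pow_sub_one K n).ne_zero hgdvd
    have hgahf : g ∣ a * f * h := by
      rw [mul_right_comm, ← dvd_add_left (dvd_mul_left g b)]
      exact hgdvd.trans (vecOf_eq_zero_iff.mp h2)
    have hlcm : GCDMonoid.lcm f (g / GCDMonoid.gcd g h) ∣ a * f :=
      lcm_dvd (dvd_mul_left f a) (div_gcd_dvd_of_dvd_mul hg0 hgahf)
    calc dEucl n f g h ≤ cycDist n (GCDMonoid.lcm f (g / GCDMonoid.gcd g h)) := by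
          unfold dEucl; omega
      _ ≤ hWt (vecOf n (a * f)) := cycDist_le_hWt hlcm h1
      _ ≤ _ := Nat.le_add_right _ _
  · have hgcd : GCDMonoid.gcd (h * f) g ∣ a * h * f + b * g :=
      dvd_add ((gcd_dvd_left _ _).trans ⟨a, by ring⟩)
        ((gcd_dvd_right _ _).trans (dvd_mul_left g b))
    calc dEucl n f g h ≤ cycDist n f + cycDist n (GCDMonoid.gcd (h * f) g) := by
          unfold dEucl; omega
      _ ≤ _ := add_le_add (cycDist_le_hWt (dvd_mul_left f a) h1) (cycDist_le_hWt hgcd h2)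

end QuasiCyclic

theorem stmt15_general (n : ℕ) (hn : 0 < n) (f g h : F[X])
    (hf : f.Monic) (hg : g.Monic)
    (hfdvd : f ∣ X ^ n - 1) (hgdvd : g ∣ X ^ n - 1)
    (hd1 : f ∣ g) (hd2 : g ∣ perpPoly n g) (hd3 : perpPoly n g ∣ perpPoly n f) :
    eDualSet (QCcode n f g h : Set ((Fin n → F) × (Fin n → F))) ⊆
        (QCcode n f g h : Set ((Fin n → F) × (Fin n → F))) ∧
      Module.finrank F (QCcode n f g h) = 2 * n - f.natDegree - g.natDegree ∧
      ∀ v ∈ QCcode n f g h, v ≠ 0 → hWt2 v ≥ dEucl n f g h := by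
  have : NeZero n := ⟨hn.ne'⟩
  exact ⟨eDualSet_QCcode_subset hf hg hfdvd hgdvd hd1 hd2 hd3, finrank_QCcode hf hg hfdvd hgdvd,
    fun v hv hv0 => dEucl_le_hWt2 hgdvd hv hv0⟩

/-- if `f ∣ g ∣ g^⊥ ∣ f^⊥`, then `Q_q(f,g,h)` contains its Euclidean dual,
has dimension `2n - deg f - deg g`, and minimum weight at least `d_q^e(f,g,h)`. -/
theorem stmt15 [Fintype F] (n : ℕ) (hn : 0 < n) (f g h : F[X])
    (hf : f.Monic) (hg : g.Monic) (hh : h.Monic)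
    (hfd : f.degree < n) (hgd : g.degree < n) (hhd : h.degree < n)
    (hfdvd : f ∣ X ^ n - 1) (hgdvd : g ∣ X ^ n - 1)
    (hd1 : f ∣ g) (hd2 : g ∣ perpPoly n g) (hd3 : perpPoly n g ∣ perpPoly n f) :
    eDualSet (QCcode n f g h : Set ((Fin n → F) × (Fin n → F))) ⊆
        (QCcode n f g h : Set ((Fin n → F) × (Fin n → F))) ∧
      Module.finrank F (QCcode n f g h) = 2 * n - f.natDegree - g.natDegree ∧
      ∀ v ∈ QCcode n f g h, v ≠ 0 → hWt2 v ≥ dEucl n f g h :=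
  stmt15_general n hn f g h hf hg hfdvd hgdvd hd1 hd2 hd3
end
end
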